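/- Let n ≥ 1 and let N > 0 be real. There is a constant C > 0, depending only on n and N, such that for all j, j' ∈ ℤ and all k, k', w ∈ ℤ^n with Q_{j',k'} ⊆ Q^w_{j,k}, one has (1+|2^{j−j'}k'−k|)^{−N} ≤ C (1+|w|)^{−N}. -/

import Mathlib

/-!
The corner `2^{-j'} k'` of `Q_{j',k'}` lies in `Q^w_{j,k}`, a cube of side `2^{8-j}` whose
index is `⌊k/2^8⌋ + w`. Scaling by `2^j` and writing `k = 2^8 ⌊k/2^8⌋ + r` with `0 ≤ r < 2^8`,
every coordinate of `2^{j-j'} k' - k` is within `2^8` of the corresponding coordinate of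
`2^8 w`. Hence `2^8 |w| ≤ |2^{j-j'} k' - k| + 2^8 √n`, so `1 + |w| ≤ (1 + √n)(1 + |2^{j-j'} k' - k|)`,
and raising to the power `-N` gives the claim with `C = (1 + √n)^N`.
-/

noncomputable section

open MeasureTheory Real Complex
open scoped ENNReal NNReal

/-- `ℝⁿ` modeled as functions `Fin n → ℝ`. -/
abbrev Vec (n : ℕ) : Type := Fin n → ℝ

/-- Integer lattice `ℤⁿ`. -/
abbrev IVec (n : ℕ) : Type := Fin n → ℤ

/-- The index set `E_n = {0,1}ⁿ \ {0}`, with `{0,1}ⁿ` modeled as `Fin n → Bool`. -/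
abbrev En (n : ℕ) : Type := {ε : Fin n → Bool // ε ≠ fun _ => false}

/-- The Euclidean norm on `Vec n`. -/
def enorm2 {n : ℕ} (x : Vec n) : ℝ := Real.sqrt (∑ i, (x i) ^ 2)

/-- The dyadic cube `Q_{j,k} = {x : 2^j x − k ∈ [0,1)ⁿ}` of side length `2^{−j}`. -/
def dyadicCube (n : ℕ) (j : ℤ) (k : IVec n) : Set (Vec n) :=
  {x | ∀ i, (k i : ℝ) ≤ (2:ℝ) ^ j * x i ∧ (2:ℝ) ^ j * x i < (k i : ℝ) + 1}

/-- `Q^w_{j,k} = 2^{8−j} w + tilde-Q_{j,k}`, where `tilde-Q_{j,k}` is the unique dyadic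
cube of side length `2^{8−j}` containing `Q_{j,k}` (its index is `⌊k/2^8⌋`). -/
def QW (n : ℕ) (j : ℤ) (k w : IVec n) : Set (Vec n) :=
  dyadicCube n (j - 8) (fun i => Int.fdiv (k i) 256 + w i)

section enorm2

variable {n : ℕ}

lemma enorm2_eq_norm (x : Vec n) : enorm2 x = ‖(WithLp.toLp 2 x : EuclideanSpace ℝ (Fin n))‖ := by
  simp [enorm2, EuclideanSpace.norm_eq, sq_abs]

lemma enorm2_nonneg (x : Vec n) : 0 ≤ enorm2 x := Real.sqrt_nonneg _

lemma enorm2_smul (c : ℝ) (x : Vec n) : enorm2 (c • x) = |c| * enorm2 x := by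
  rw [enorm2_eq_norm, enorm2_eq_norm, WithLp.toLp_smul, norm_smul, Real.norm_eq_abs]

lemma enorm2_le_enorm2_add_enorm2_sub (x y : Vec n) : enorm2 x ≤ enorm2 y + enorm2 (x - y) := by
  simp only [enorm2_eq_norm, WithLp.toLp_sub]
  exact norm_le_norm_add_norm_sub' _ _

lemma enorm2_le_sqrt_card_mul {x : Vec n} {M : ℝ} (hM : 0 ≤ M) (hx : ∀ i, |x i| ≤ M) :
    enorm2 x ≤ √n * M := by
  have hsum : ∑ i, x i ^ 2 ≤ n * M ^ 2 := by
    have hsq : ∀ i ∈ Finset.univ, x i ^ 2 ≤ M ^ 2 := fun i _ => by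
      rw [← sq_abs]
      exact pow_le_pow_left₀ (abs_nonneg _) (hx i) 2
    simpa using Finset.sum_le_sum hsq
  calc enorm2 x ≤ √(n * M ^ 2) := Real.sqrt_le_sqrt hsum
    _ = √n * M := by rw [Real.sqrt_mul n.cast_nonneg, Real.sqrt_sq hM]

end enorm2

lemma zpow_neg_mul_mem_dyadicCube (n : ℕ) (j : ℤ) (k : IVec n) :
    (fun i => (2:ℝ) ^ (-j) * k i) ∈ dyadicCube n j k := by
  intro i
  rw [← mul_assoc, ← zpow_add₀ two_ne_zero, add_neg_cancel, zpow_zero, one_mul]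
  exact ⟨le_rfl, lt_add_one _⟩

lemma abs_zpow_mul_sub_sub_lt_of_mem_QW {n : ℕ} {j : ℤ} {k w : IVec n} {x : Vec n}
    (hx : x ∈ QW n j k w) (i : Fin n) :
    |(2:ℝ) ^ j * x i - k i - 256 * w i| < 256 := by
  obtain ⟨hlo, hhi⟩ := hx i
  have hscale : (2:ℝ) ^ j * x i = 256 * ((2:ℝ) ^ (j - 8) * x i) := by
    rw [← mul_assoc, show j = (j - 8) + 8 by ring, zpow_add₀ two_ne_zero]
    norm_num [mul_comm]
  have hdiv : (k i : ℝ) = 256 * (k i / 256 : ℤ) + (k i % 256 : ℤ) := by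
    exact_mod_cast (Int.mul_ediv_add_emod (k i) 256).symm
  have hr₀ : (0:ℝ) ≤ (k i % 256 : ℤ) := by exact_mod_cast Int.emod_nonneg _ (by norm_num)
  have hr₁ : ((k i % 256 : ℤ) : ℝ) < 256 := by exact_mod_cast Int.emod_lt_of_pos _ (by norm_num)
  simp only [Int.fdiv_eq_ediv_of_nonneg _ (show (0:ℤ) ≤ 256 by norm_num)] at hlo hhi
  push_cast at hlo hhi
  rw [abs_lt, hscale, hdiv]
  constructor <;> linarith

lemma enorm2_le_of_dyadicCube_subset_QW {n : ℕ} {j j' : ℤ} {k k' w : IVec n}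
    (hsub : dyadicCube n j' k' ⊆ QW n j k w) :
    256 * enorm2 (fun i => (w i : ℝ)) ≤
      enorm2 (fun i => (2:ℝ) ^ (j - j') * k' i - k i) + 256 * √n := by
  set a : Vec n := fun i => (2:ℝ) ^ (j - j') * k' i - k i
  set v : Vec n := fun i => (w i : ℝ)
  have hcoord : ∀ i, |((256:ℝ) • v - a) i| ≤ 256 := fun i => by
    have h := abs_zpow_mul_sub_sub_lt_of_mem_QW (hsub (zpow_neg_mul_mem_dyadicCube n j' k')) i
    rw [← mul_assoc, ← zpow_add₀ two_ne_zero, ← sub_eq_add_neg, abs_sub_comm] at h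
    simpa only [Pi.sub_apply, Pi.smul_apply, smul_eq_mul, a, v] using h.le
  calc 256 * enorm2 v = enorm2 ((256:ℝ) • v) := by rw [enorm2_smul]; norm_num
    _ ≤ enorm2 a + enorm2 ((256:ℝ) • v - a) := enorm2_le_enorm2_add_enorm2_sub _ _
    _ ≤ enorm2 a + 256 * √n := by
      linarith [enorm2_le_sqrt_card_mul (by norm_num) hcoord]

lemma rpow_neg_le_mul_rpow_neg_of_le_mul {u v c N : ℝ} (hu : 0 < u) (hv : 0 < v) (hc : 0 < c)
    (hN : 0 ≤ N) (h : v ≤ c * u) : u ^ (-N) ≤ c ^ N * v ^ (-N) := by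
  have hmono : (c * u) ^ (-N) ≤ v ^ (-N) :=
    Real.rpow_le_rpow_of_nonpos hv h (neg_nonpos.mpr hN)
  calc u ^ (-N) = c ^ N * (c * u) ^ (-N) := by
        rw [Real.mul_rpow hc.le hu.le, ← mul_assoc, ← Real.rpow_add hc, add_neg_cancel,
          Real.rpow_zero, one_mul]
    _ ≤ c ^ N * v ^ (-N) := by gcongr

theorem statement6_general (n : ℕ) (N : ℝ) (hN : 0 < N) :
    ∃ C : ℝ, 0 < C ∧ ∀ (j j' : ℤ) (k k' w : IVec n),
      dyadicCube n j' k' ⊆ QW n j k w →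
      (1 + enorm2 (fun i => (2:ℝ) ^ (j - j') * (k' i : ℝ) - (k i : ℝ))) ^ (-N) ≤
        C * (1 + enorm2 (fun i => ((w i : ℝ)))) ^ (-N) := by
  refine ⟨(1 + √n) ^ N, by positivity, fun j j' k k' w hsub => ?_⟩
  have hbound := enorm2_le_of_dyadicCube_subset_QW hsub
  have hA := enorm2_nonneg (fun i => (2:ℝ) ^ (j - j') * (k' i : ℝ) - (k i : ℝ))
  have hW := enorm2_nonneg (fun i => ((w i : ℝ)))
  have hs := Real.sqrt_nonneg n
  exact rpow_neg_le_mul_rpow_neg_of_le_mul (by linarith) (by linarith) (by linarith) hN.le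
    (by nlinarith)

/-- if `Q_{j',k'} ⊆ Q^w_{j,k}` then
`(1+|2^{j−j'}k'−k|)^{−N} ≤ C (1+|w|)^{−N}`. -/
theorem statement6 (n : ℕ) (hn : 1 ≤ n) (N : ℝ) (hN : 0 < N) :
    ∃ C : ℝ, 0 < C ∧ ∀ (j j' : ℤ) (k k' w : IVec n),
      dyadicCube n j' k' ⊆ QW n j k w →
      (1 + enorm2 (fun i => (2:ℝ) ^ (j - j') * (k' i : ℝ) - (k i : ℝ))) ^ (-N) ≤
        C * (1 + enorm2 (fun i => ((w i : ℝ)))) ^ (-N) :=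
  statement6_general n N hN
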